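/- arXiv:2401.03051 — 7 statements merged into one kernel-verified Lean document; each statement's English description precedes it below -/
import Mathlib

section
/- For every t ≥ 0 and every β ∈ R^K and λ ∈ R, the t-th iterate of the SUCPA map satisfies f^{(t)}(β + λ·1) = f^{(t)}(β) + λ·1. -/
open Real Finset

/-- The SUCPA map: `f k β = -log((1/N_k) Σ_i P_{i,k} / (Σ_j P_{i,j} e^{β_j}))`. -/
noncomputable def sucpa {N K : ℕ} (P : Fin N → Fin K → ℝ) (Nk : Fin K → ℕ)
    (β : Fin K → ℝ) : Fin K → ℝ :=
  fun k => -Real.log ((1 / (Nk k : ℝ)) * ∑ i, P i k / ∑ j, P i j * Real.exp (β j))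

/-!
Shifting `β` by `λ • 1` multiplies every denominator `Σ_j P_{i,j} e^{β_j}` by `e^λ`, hence the
argument of the logarithm by `e^{-λ}`, which the `-log` turns into `+λ`. So `f` commutes with
translation along `1`, and therefore so does every iterate of `f`.
-/

section WeightedExpSums

variable {ι κ : Type*} [Fintype κ] (P : ι → κ → ℝ) (β : κ → ℝ)

theorem sum_mul_exp_add_const (i : ι) (lam : ℝ) :
    ∑ j, P i j * exp (β j + lam) = exp lam * ∑ j, P i j * exp (β j) := by
  rw [Finset.mul_sum]
  exact Finset.sum_congr rfl fun j _ => by rw [exp_add]; ring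

theorem sum_div_sum_mul_exp_add_const [Fintype ι] (k : κ) (lam : ℝ) :
    ∑ i, P i k / ∑ j, P i j * exp (β j + lam)
      = exp (-lam) * ∑ i, P i k / ∑ j, P i j * exp (β j) := by
  rw [Finset.mul_sum]
  refine Finset.sum_congr rfl fun i _ => ?_
  rw [sum_mul_exp_add_const, exp_neg, div_mul_eq_div_div_swap, div_eq_inv_mul (_ / _)]

theorem sum_div_sum_mul_exp_pos [Fintype ι] [Nonempty ι] (hP : ∀ i k, 0 < P i k) (k : κ) :
    0 < ∑ i, P i k / ∑ j, P i j * exp (β j) := by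
  have : Nonempty κ := ⟨k⟩
  refine Finset.sum_pos (fun i _ => div_pos (hP i k) ?_) univ_nonempty
  exact Finset.sum_pos (fun j _ => mul_pos (hP i j) (exp_pos _)) univ_nonempty

end WeightedExpSums

theorem sucpa_add_const {N K : ℕ} (hN : 1 ≤ N) (Nk : Fin K → ℕ) (hNk : ∀ k, 0 < Nk k)
    (P : Fin N → Fin K → ℝ) (hP : ∀ i k, 0 < P i k) (β : Fin K → ℝ) (lam : ℝ) :
    sucpa P Nk (β + fun _ => lam) = sucpa P Nk β + fun _ => lam := by
  have : Nonempty (Fin N) := Fin.pos_iff_nonempty.mp hN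
  funext k
  have hmass := sum_div_sum_mul_exp_pos P β hP k
  have hNk' : (0 : ℝ) < Nk k := Nat.cast_pos.mpr (hNk k)
  simp only [sucpa, Pi.add_apply, sum_div_sum_mul_exp_add_const]
  rw [mul_left_comm, log_mul (exp_ne_zero _) (by positivity), log_exp]
  ring

theorem sucpa_iterate_equivariant_general {N K : ℕ} (hN : 1 ≤ N)
    (Nk : Fin K → ℕ) (hNk : ∀ k, 0 < Nk k)
    (P : Fin N → Fin K → ℝ) (hP : ∀ i k, 0 < P i k)
    (t : ℕ) (β : Fin K → ℝ) (lam : ℝ) :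
    (sucpa P Nk)^[t] (β + fun _ => lam) = (sucpa P Nk)^[t] β + fun _ => lam :=
  Function.Commute.iterate_left (g := (· + fun _ => lam))
    (fun β => sucpa_add_const hN Nk hNk P hP β lam) t β

theorem sucpa_iterate_equivariant {N K : ℕ} (hK : 2 ≤ K) (hN : 1 ≤ N)
    (Nk : Fin K → ℕ) (hNk : ∀ k, 0 < Nk k) (hNsum : ∑ k, Nk k = N)
    (P : Fin N → Fin K → ℝ) (hP : ∀ i k, 0 < P i k) (hProw : ∀ i, ∑ k, P i k = 1)
    (t : ℕ) (β : Fin K → ℝ) (lam : ℝ) :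
    (sucpa P Nk)^[t] (β + fun _ => lam) = (sucpa P Nk)^[t] β + fun _ => lam :=
  sucpa_iterate_equivariant_general hN Nk hNk P hP t β lam
end

section
/- Each entry of the Jacobian matrix of the SUCPA map is strictly positive: for all β ∈ R^K and all k, ℓ, the partial derivative ∂f_k/∂β_ℓ(β) equals [Σ_i P_{i,k} P_{i,ℓ} e^{β_ℓ} / (Σ_j P_{i,j} e^{β_j})^2] / [Σ_i P_{i,k} / (Σ_j P_{i,j} e^{β_j})] and is > 0. -/
open Real Finset

open Function

section

variable {ι : Type*} [Fintype ι]

theorem sum_mul_exp_pos (c β : ι → ℝ) (hc : ∀ j, 0 < c j) (l : ι) :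
    0 < ∑ j, c j * exp (β j) :=
  sum_pos (fun j _ => mul_pos (hc j) (exp_pos _)) ⟨l, mem_univ l⟩

theorem hasDerivAt_sum_mul_exp_update [DecidableEq ι] (c β : ι → ℝ) (l : ι) (x : ℝ) :
    HasDerivAt (fun y => ∑ j, c j * exp (update β l y j)) (c l * exp x) x := by
  have hterm : ∀ j, HasDerivAt (fun y => c j * exp (update β l y j))
      (if j = l then c l * exp x else 0) x := by
    intro j
    rcases eq_or_ne j l with rfl | hj
    · simpa using (hasDerivAt_exp x).const_mul (c j)
    · simpa [update_of_ne hj, hj] using hasDerivAt_const x (c j * exp (β j))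
  simpa using HasDerivAt.fun_sum (u := univ) fun j _ => hterm j

theorem hasDerivAt_sum_div_sum_mul_exp_update [DecidableEq ι] {κ : Type*} [Fintype κ]
    (a : κ → ℝ) (P : κ → ι → ℝ) (hP : ∀ i j, 0 < P i j) (β : ι → ℝ) (l : ι) :
    HasDerivAt (fun y => ∑ i, a i / ∑ j, P i j * exp (update β l y j))
      (-∑ i, a i * P i l * exp (β l) / (∑ j, P i j * exp (β j)) ^ 2) (β l) := by
  rw [← sum_neg_distrib]
  refine HasDerivAt.fun_sum fun i _ => ?_
  have hD := sum_mul_exp_pos (P i) (update β l (β l)) (hP i) l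
  simpa [update_eq_self, neg_div, mul_assoc] using
    (hasDerivAt_const (β l) (a i)).fun_div (hasDerivAt_sum_mul_exp_update (P i) β l (β l)) hD.ne'

end

theorem hasDerivAt_neg_log_const_mul {g : ℝ → ℝ} {g' c x : ℝ} (hg : HasDerivAt g g' x)
    (hc : c ≠ 0) (hgx : g x ≠ 0) :
    HasDerivAt (fun y => -log (c * g y)) (-g' / g x) x := by
  simpa [mul_div_mul_left _ _ hc, neg_div] using
    ((hg.const_mul c).log (mul_ne_zero hc hgx)).fun_neg

theorem sucpa_jacobian_entries_pos_general {N K : ℕ} (hN : 1 ≤ N)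
    (Nk : Fin K → ℕ) (hNk : ∀ k, 0 < Nk k)
    (P : Fin N → Fin K → ℝ) (hP : ∀ i k, 0 < P i k)
    (β : Fin K → ℝ) (k l : Fin K) :
    HasDerivAt (fun x : ℝ => sucpa P Nk (Function.update β l x) k)
      ((∑ i, P i k * P i l * Real.exp (β l) / (∑ j, P i j * Real.exp (β j)) ^ 2) /
        (∑ i, P i k / ∑ j, P i j * Real.exp (β j))) (β l) ∧
    0 < (∑ i, P i k * P i l * Real.exp (β l) / (∑ j, P i j * Real.exp (β j)) ^ 2) /
        (∑ i, P i k / ∑ j, P i j * Real.exp (β j)) := by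
  have hNne : (univ : Finset (Fin N)).Nonempty := ⟨⟨0, hN⟩, mem_univ _⟩
  have hD : ∀ i, 0 < ∑ j, P i j * exp (β j) := fun i => sum_mul_exp_pos (P i) β (hP i) l
  have hden : 0 < ∑ i, P i k / ∑ j, P i j * exp (β j) :=
    sum_pos (fun i _ => div_pos (hP i k) (hD i)) hNne
  have hnum : 0 < ∑ i, P i k * P i l * exp (β l) / (∑ j, P i j * exp (β j)) ^ 2 :=
    sum_pos (fun i _ => by have := hD i; have := hP i k; have := hP i l; positivity) hNne
  refine ⟨?_, div_pos hnum hden⟩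
  have hNk' : (1 / (Nk k : ℝ)) ≠ 0 := by simpa using (hNk k).ne'
  have hlog := hasDerivAt_neg_log_const_mul
    (hasDerivAt_sum_div_sum_mul_exp_update (fun i => P i k) P hP β l) hNk'
    (by simpa [update_eq_self] using hden.ne')
  simpa [sucpa, update_eq_self, neg_div] using hlog

theorem sucpa_jacobian_entries_pos {N K : ℕ} (hK : 2 ≤ K) (hN : 1 ≤ N)
    (Nk : Fin K → ℕ) (hNk : ∀ k, 0 < Nk k) (hNsum : ∑ k, Nk k = N)
    (P : Fin N → Fin K → ℝ) (hP : ∀ i k, 0 < P i k) (hProw : ∀ i, ∑ k, P i k = 1)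
    (β : Fin K → ℝ) (k l : Fin K) :
    HasDerivAt (fun x : ℝ => sucpa P Nk (Function.update β l x) k)
      ((∑ i, P i k * P i l * Real.exp (β l) / (∑ j, P i j * Real.exp (β j)) ^ 2) /
        (∑ i, P i k / ∑ j, P i j * Real.exp (β j))) (β l) ∧
    0 < (∑ i, P i k * P i l * Real.exp (β l) / (∑ j, P i j * Real.exp (β j)) ^ 2) /
        (∑ i, P i k / ∑ j, P i j * Real.exp (β j)) :=
  sucpa_jacobian_entries_pos_general hN Nk hNk P hP β k l
end

section
/- Along any orbit of the SUCPA algorithm, the increments Δ_k(t) = β_k^{[t+1]} - β_k^{[t]} satisfy the balance identity Σ_{k=1}^K N_k e^{-Δ_k(t)} = N. -/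
/-! Unwinding the logarithm, `N_k e^{-Δ_k} = Σ_i P_{ik} e^{β_k} / Σ_j P_{ij} e^{β_j}`. Summing over
`k` first, each sample `i` contributes exactly `1`, so the total is `N`. -/

open Real Finset

lemma sum_mul_exp_pos_s5 {ι : Type*} [Fintype ι] [Nonempty ι] {p : ι → ℝ} (hp : ∀ j, 0 < p j)
    (β : ι → ℝ) : 0 < ∑ j, p j * exp (β j) :=
  sum_pos (fun j _ => mul_pos (hp j) (exp_pos _)) univ_nonempty

section

variable {N K : ℕ} [Nonempty (Fin N)] [Nonempty (Fin K)] {P : Fin N → Fin K → ℝ}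
  {Nk : Fin K → ℕ}

lemma exp_neg_sucpa (hP : ∀ i k, 0 < P i k) (β : Fin K → ℝ) {k : Fin K} (hk : 0 < Nk k) :
    exp (-sucpa P Nk β k) = 1 / (Nk k : ℝ) * ∑ i, P i k / ∑ j, P i j * exp (β j) := by
  have hsum : 0 < ∑ i, P i k / ∑ j, P i j * exp (β j) :=
    sum_pos (fun i _ => div_pos (hP i k) (sum_mul_exp_pos_s5 (hP i) β)) univ_nonempty
  rw [sucpa, neg_neg, exp_log (mul_pos (one_div_pos.mpr (Nat.cast_pos.mpr hk)) hsum)]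

lemma natCast_mul_exp_neg_sucpa_sub (hP : ∀ i k, 0 < P i k) (β : Fin K → ℝ) {k : Fin K}
    (hk : 0 < Nk k) :
    (Nk k : ℝ) * exp (-(sucpa P Nk β k - β k)) =
      ∑ i, P i k * exp (β k) / ∑ j, P i j * exp (β j) := by
  have hk' : (Nk k : ℝ) ≠ 0 := Nat.cast_ne_zero.mpr hk.ne'
  rw [neg_sub, sub_eq_add_neg, exp_add, exp_neg_sucpa hP β hk, one_div,
    mul_left_comm, mul_inv_cancel_left₀ hk', mul_sum]
  exact sum_congr rfl fun i _ => by ring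

end

theorem sucpa_increment_balance_general {N K : ℕ} (hK : 2 ≤ K) (hN : 1 ≤ N)
    (Nk : Fin K → ℕ) (hNk : ∀ k, 0 < Nk k)
    (P : Fin N → Fin K → ℝ) (hP : ∀ i k, 0 < P i k)
    (β : Fin K → ℝ) :
    ∑ k, (Nk k : ℝ) * Real.exp (-(sucpa P Nk β k - β k)) = (N : ℝ) := by
  have : Nonempty (Fin N) := Fin.pos_iff_nonempty.mp hN
  have : Nonempty (Fin K) := Fin.pos_iff_nonempty.mp (by omega)
  have hrow (i : Fin N) : ∑ k, P i k * exp (β k) / ∑ j, P i j * exp (β j) = 1 := by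
    rw [← sum_div, div_self (sum_mul_exp_pos_s5 (hP i) β).ne']
  simp_rw [natCast_mul_exp_neg_sucpa_sub hP β (hNk _)]
  rw [sum_comm]
  simp [hrow]

theorem sucpa_increment_balance {N K : ℕ} (hK : 2 ≤ K) (hN : 1 ≤ N)
    (Nk : Fin K → ℕ) (hNk : ∀ k, 0 < Nk k) (hNsum : ∑ k, Nk k = N)
    (P : Fin N → Fin K → ℝ) (hP : ∀ i k, 0 < P i k) (hProw : ∀ i, ∑ k, P i k = 1)
    (β : Fin K → ℝ) :
    ∑ k, (Nk k : ℝ) * Real.exp (-(sucpa P Nk β k - β k)) = (N : ℝ) :=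
  sucpa_increment_balance_general hK hN Nk hNk P hP β
end

section
/- The set of fixed points of the two-dimensional SUCPA map is exactly the line S_b = {(λ, λ + b) : λ ∈ R}, where b is the unique real number with α_1(b) = 1. -/
open Real Finset Filter

/-- Auxiliary function `α₁(x) = (1/N₁) Σ_i p_i / (p_i + q_i e^x)`. -/
noncomputable def alpha1 {N : ℕ} (N1 : ℕ) (p q : Fin N → ℝ) (x : ℝ) : ℝ :=
  (1 / (N1 : ℝ)) * ∑ i, p i / (p i + q i * Real.exp x)

/-- Auxiliary function `α₂(x) = (1/N₂) Σ_i q_i / (p_i + q_i e^x)`. -/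
noncomputable def alpha2 {N : ℕ} (N2 : ℕ) (p q : Fin N → ℝ) (x : ℝ) : ℝ :=
  (1 / (N2 : ℝ)) * ∑ i, q i / (p i + q i * Real.exp x)

/-- The two-dimensional SUCPA map. -/
noncomputable def sucpa2 {N : ℕ} (N1 N2 : ℕ) (p q : Fin N → ℝ)
    (β : Fin 2 → ℝ) : Fin 2 → ℝ :=
  ![-Real.log ((1 / (N1 : ℝ)) *
      ∑ i, p i / (p i * Real.exp (β 0) + q i * Real.exp (β 1))),
    -Real.log ((1 / (N2 : ℝ)) *
      ∑ i, q i / (p i * Real.exp (β 0) + q i * Real.exp (β 1)))]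

/-! Factoring `e^{β₀}` out of the common denominator `p_i e^{β₀} + q_i e^{β₁}` shows that
`β` is a fixed point iff `x = β₁ - β₀` satisfies `α₁(x) = 1` and `e^x α₂(x) = 1`. Since
`N₁ α₁(x) + N₂ e^x α₂(x) = N`, these two conditions are equivalent, and since `α₁` is
strictly decreasing they hold exactly when `x = b`. -/

lemma div_mul_exp_add_mul_exp (x y u a c : ℝ) :
    u / (x * exp a + y * exp c) = exp (-a) * (u / (x + y * exp (c - a))) := by
  have hfactor : x * exp a + y * exp c = exp a * (x + y * exp (c - a)) := by
    rw [exp_sub]; field_simp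
  rw [hfactor, div_mul_eq_div_div_swap, div_eq_inv_mul, exp_neg]

lemma neg_log_eq_iff {y c : ℝ} (hy : 0 < y) : -log y = c ↔ y = exp (-c) := by
  rw [neg_eq_iff_eq_neg, ← exp_eq_exp, exp_log hy]

lemma exists_eq_vecCons_add_iff (β : Fin 2 → ℝ) (b : ℝ) :
    (∃ lam : ℝ, β = ![lam, lam + b]) ↔ β 1 - β 0 = b := by
  constructor
  · rintro ⟨lam, rfl⟩
    simp
  · intro h
    refine ⟨β 0, funext fun i => ?_⟩
    fin_cases i <;> simp [← h]

section

variable {N : ℕ} (N1 N2 : ℕ) (p q : Fin N → ℝ)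

lemma sucpa2_apply_zero (β : Fin 2 → ℝ) :
    sucpa2 N1 N2 p q β 0 = -log (exp (-β 0) * alpha1 N1 p q (β 1 - β 0)) := by
  simp only [sucpa2, alpha1, Matrix.cons_val_zero, div_mul_exp_add_mul_exp, ← mul_sum]
  rw [mul_left_comm]

lemma sucpa2_apply_one (β : Fin 2 → ℝ) :
    sucpa2 N1 N2 p q β 1 = -log (exp (-β 0) * alpha2 N2 p q (β 1 - β 0)) := by
  simp only [sucpa2, alpha2, Matrix.cons_val_one, Matrix.cons_val_zero,
    div_mul_exp_add_mul_exp, ← mul_sum]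
  rw [mul_left_comm]

variable {N1 N2 p q}

lemma alpha1_pos (hN1 : 0 < N1) (hN0 : 0 < N) (hp : ∀ i, 0 < p i) (hq : ∀ i, 0 < q i)
    (x : ℝ) :
    0 < alpha1 N1 p q x := by
  have : Nonempty (Fin N) := Fin.pos_iff_nonempty.mp hN0
  exact mul_pos (by positivity)
    (sum_pos (fun i _ => have := hp i; have := hq i; by positivity) univ_nonempty)

lemma alpha2_pos (hN2 : 0 < N2) (hN0 : 0 < N) (hp : ∀ i, 0 < p i) (hq : ∀ i, 0 < q i)
    (x : ℝ) :
    0 < alpha2 N2 p q x := by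
  have : Nonempty (Fin N) := Fin.pos_iff_nonempty.mp hN0
  exact mul_pos (by positivity)
    (sum_pos (fun i _ => have := hp i; have := hq i; by positivity) univ_nonempty)

lemma alpha1_strictAnti (hN1 : 0 < N1) (hN0 : 0 < N) (hp : ∀ i, 0 < p i) (hq : ∀ i, 0 < q i) :
    StrictAnti (alpha1 N1 p q) := by
  intro x y hxy
  have : Nonempty (Fin N) := Fin.pos_iff_nonempty.mp hN0
  refine mul_lt_mul_of_pos_left (sum_lt_sum_of_nonempty univ_nonempty fun i _ => ?_)
    (by positivity)
  have := hp i; have := hq i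
  gcongr

lemma mul_alpha1_add_mul_exp_mul_alpha2 (hN1 : N1 ≠ 0) (hN2 : N2 ≠ 0) (hp : ∀ i, 0 < p i)
    (hq : ∀ i, 0 < q i) (x : ℝ) :
    N1 * alpha1 N1 p q x + N2 * (exp x * alpha2 N2 p q x) = N := by
  have hterm (i : Fin N) :
      p i / (p i + q i * exp x) + exp x * (q i / (p i + q i * exp x)) = 1 := by
    have := hp i; have := hq i
    field_simp
  rw [alpha1, alpha2, mul_left_comm (exp x), one_div, one_div,
    mul_inv_cancel_left₀ (Nat.cast_ne_zero.mpr hN1),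
    mul_inv_cancel_left₀ (Nat.cast_ne_zero.mpr hN2), mul_sum, ← sum_add_distrib]
  simp [hterm]

lemma exp_mul_alpha2_eq_one_iff (hN1 : N1 ≠ 0) (hN2 : N2 ≠ 0) (hN : N1 + N2 = N)
    (hp : ∀ i, 0 < p i) (hq : ∀ i, 0 < q i) (x : ℝ) :
    exp x * alpha2 N2 p q x = 1 ↔ alpha1 N1 p q x = 1 := by
  have hsum := mul_alpha1_add_mul_exp_mul_alpha2 hN1 hN2 hp hq x
  have hcast : (N1 : ℝ) + N2 = N := by exact_mod_cast hN
  constructor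
  · intro h
    rw [h] at hsum
    exact mul_left_cancel₀ (Nat.cast_ne_zero.mpr hN1) (by linarith)
  · intro h
    rw [h] at hsum
    exact mul_left_cancel₀ (Nat.cast_ne_zero.mpr hN2) (by linarith)

variable (N1 N2 p q)

lemma sucpa2_apply_zero_eq_self_iff {β : Fin 2 → ℝ} (hα : 0 < alpha1 N1 p q (β 1 - β 0)) :
    sucpa2 N1 N2 p q β 0 = β 0 ↔ alpha1 N1 p q (β 1 - β 0) = 1 := by
  rw [sucpa2_apply_zero, neg_log_eq_iff (mul_pos (exp_pos _) hα), mul_eq_left₀ (exp_ne_zero _)]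

lemma sucpa2_apply_one_eq_self_iff {β : Fin 2 → ℝ} (hα : 0 < alpha2 N2 p q (β 1 - β 0)) :
    sucpa2 N1 N2 p q β 1 = β 1 ↔ exp (β 1 - β 0) * alpha2 N2 p q (β 1 - β 0) = 1 := by
  have hexp : exp (β 1 - β 0) = exp (-β 0) / exp (-β 1) := by
    rw [← exp_sub, neg_sub_neg]
  rw [sucpa2_apply_one, neg_log_eq_iff (mul_pos (exp_pos _) hα), hexp, div_mul_eq_mul_div,
    div_eq_one_iff_eq (exp_ne_zero _)]

lemma sucpa2_eq_self_iff (hN1 : 0 < N1) (hN2 : 0 < N2) (hN : N1 + N2 = N)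
    (hp : ∀ i, 0 < p i) (hq : ∀ i, 0 < q i) (β : Fin 2 → ℝ) :
    sucpa2 N1 N2 p q β = β ↔ alpha1 N1 p q (β 1 - β 0) = 1 := by
  have hN0 : 0 < N := by omega
  rw [funext_iff, Fin.forall_fin_two,
    sucpa2_apply_zero_eq_self_iff N1 N2 p q (alpha1_pos hN1 hN0 hp hq _),
    sucpa2_apply_one_eq_self_iff N1 N2 p q (alpha2_pos hN2 hN0 hp hq _),
    exp_mul_alpha2_eq_one_iff hN1.ne' hN2.ne' hN hp hq, and_self]

end

theorem fixed_points_eq_line_general {N : ℕ} (N1 N2 : ℕ) (hN1 : 0 < N1) (hN2 : 0 < N2)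
    (hN : N1 + N2 = N) (p q : Fin N → ℝ) (hp : ∀ i, 0 < p i) (hq : ∀ i, 0 < q i)
    (b : ℝ) (hb : alpha1 N1 p q b = 1) :
    {β : Fin 2 → ℝ | sucpa2 N1 N2 p q β = β} =
      {β : Fin 2 → ℝ | ∃ lam : ℝ, β = ![lam, lam + b]} := by
  have hN0 : 0 < N := by omega
  ext β
  exact (sucpa2_eq_self_iff N1 N2 p q hN1 hN2 hN hp hq β).trans <|
    ((alpha1_strictAnti hN1 hN0 hp hq).injective.eq_iff' hb).trans
      (exists_eq_vecCons_add_iff β b).symm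

theorem fixed_points_eq_line {N : ℕ} (N1 N2 : ℕ) (hN1 : 0 < N1) (hN2 : 0 < N2)
    (hN : N1 + N2 = N) (p q : Fin N → ℝ) (hp : ∀ i, 0 < p i) (hq : ∀ i, 0 < q i)
    (hpq : ∀ i, p i + q i = 1) (b : ℝ) (hb : alpha1 N1 p q b = 1) :
    {β : Fin 2 → ℝ | sucpa2 N1 N2 p q β = β} =
      {β : Fin 2 → ℝ | ∃ lam : ℝ, β = ![lam, lam + b]} :=
  fixed_points_eq_line_general N1 N2 hN1 hN2 hN p q hp hq b hb
end

section
/- The function g(x) = α_2(x)/α_1(x) is monotone non-increasing on R. -/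
/-!
Writing `a = eˣ ≤ b = eʸ`, clearing denominators in `α₂(y)/α₁(y) ≤ α₂(x)/α₁(x)` turns it into a double sum over
pairs `(i, j)`. Pairing `(i, j)` with `(j, i)` gives the contribution
`-(b - a) (pᵢqⱼ - pⱼqᵢ)² / ((pᵢ + qᵢa)(pᵢ + qᵢb)(pⱼ + qⱼa)(pⱼ + qⱼb)) ≤ 0`,
the discrete form of the Wronskian inequality `α₂'α₁ - α₁'α₂ ≤ 0`.
-/

open Real Finset Filter

theorem Finset.sum_sum_nonpos_of_add_swap_nonpos {ι M : Type*} [AddCommMonoid M] [LinearOrder M]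
    [IsOrderedAddMonoid M] (s : Finset ι) (g : ι → ι → M)
    (h : ∀ i ∈ s, ∀ j ∈ s, g i j + g j i ≤ 0) :
    ∑ i ∈ s, ∑ j ∈ s, g i j ≤ 0 := by
  have hsymm : 2 • ∑ i ∈ s, ∑ j ∈ s, g i j = ∑ i ∈ s, ∑ j ∈ s, (g i j + g j i) := by
    rw [two_nsmul]
    nth_rewrite 2 [sum_comm]
    simp only [sum_add_distrib]
  rw [← nsmul_nonpos_iff two_ne_zero, hsymm]
  exact sum_nonpos fun i hi => sum_nonpos fun j hj => h i hi j hj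

theorem cross_resolvent_add_swap_nonpos {a b p₁ q₁ p₂ q₂ : ℝ} (hab : a ≤ b)
    (h₁a : 0 < p₁ + q₁ * a) (h₁b : 0 < p₁ + q₁ * b) (h₂a : 0 < p₂ + q₂ * a)
    (h₂b : 0 < p₂ + q₂ * b) :
    q₁ / (p₁ + q₁ * b) * (p₂ / (p₂ + q₂ * a)) - q₁ / (p₁ + q₁ * a) * (p₂ / (p₂ + q₂ * b)) +
      (q₂ / (p₂ + q₂ * b) * (p₁ / (p₁ + q₁ * a)) - q₂ / (p₂ + q₂ * a) * (p₁ / (p₁ + q₁ * b)))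
      ≤ 0 := by
  have hsum :
      q₁ / (p₁ + q₁ * b) * (p₂ / (p₂ + q₂ * a)) - q₁ / (p₁ + q₁ * a) * (p₂ / (p₂ + q₂ * b)) +
        (q₂ / (p₂ + q₂ * b) * (p₁ / (p₁ + q₁ * a)) - q₂ / (p₂ + q₂ * a) * (p₁ / (p₁ + q₁ * b))) =
      -((b - a) * (p₁ * q₂ - p₂ * q₁) ^ 2) /
        ((p₁ + q₁ * a) * (p₁ + q₁ * b) * (p₂ + q₂ * a) * (p₂ + q₂ * b)) := by
    have := h₁a.ne'; have := h₁b.ne'; have := h₂a.ne'; have := h₂b.ne'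
    -- `field_simp` would rewrite `q * b` to `b * q` and no longer see these denominators as nonzero.
    generalize hA₁ : p₁ + q₁ * a = A₁ at *
    generalize hB₁ : p₁ + q₁ * b = B₁ at *
    generalize hA₂ : p₂ + q₂ * a = A₂ at *
    generalize hB₂ : p₂ + q₂ * b = B₂ at *
    field_simp
    rw [← hA₁, ← hB₁, ← hA₂, ← hB₂]
    ring
  rw [hsum]
  have : 0 ≤ (b - a) * (p₁ * q₂ - p₂ * q₁) ^ 2 := mul_nonneg (sub_nonneg.2 hab) (sq_nonneg _)
  exact div_nonpos_of_nonpos_of_nonneg (neg_nonpos.2 this) (by positivity)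

theorem sum_resolvent_mul_sum_resolvent_le {ι : Type*} (s : Finset ι) {p q : ι → ℝ}
    (hp : ∀ i, 0 < p i) (hq : ∀ i, 0 < q i) {a b : ℝ} (ha : 0 ≤ a) (hab : a ≤ b) :
    (∑ i ∈ s, q i / (p i + q i * b)) * ∑ i ∈ s, p i / (p i + q i * a) ≤
      (∑ i ∈ s, q i / (p i + q i * a)) * ∑ i ∈ s, p i / (p i + q i * b) := by
  have hden : ∀ i {c : ℝ}, 0 ≤ c → 0 < p i + q i * c := fun i c hc =>
    add_pos_of_pos_of_nonneg (hp i) (mul_nonneg (hq i).le hc)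
  rw [← sub_nonpos, sum_mul_sum, sum_mul_sum]
  simp only [← sum_sub_distrib]
  exact sum_sum_nonpos_of_add_swap_nonpos s _ fun i _ j _ =>
    cross_resolvent_add_swap_nonpos hab (hden i ha) (hden i (ha.trans hab)) (hden j ha)
      (hden j (ha.trans hab))

theorem antitone_sum_resolvent_div_sum_resolvent {ι : Type*} [Fintype ι] {p q : ι → ℝ}
    (hp : ∀ i, 0 < p i) (hq : ∀ i, 0 < q i) :
    Antitone fun x => (∑ i, q i / (p i + q i * exp x)) / ∑ i, p i / (p i + q i * exp x) := by
  intro x y hxy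
  rcases isEmpty_or_nonempty ι with hι | hι
  · simp
  have hpos : ∀ z, 0 < ∑ i, p i / (p i + q i * exp z) := fun z =>
    sum_pos (fun i _ => by have := hp i; have := hq i; positivity) univ_nonempty
  rw [div_le_div_iff₀ (hpos y) (hpos x)]
  exact sum_resolvent_mul_sum_resolvent_le _ hp hq (exp_pos x).le (exp_le_exp.2 hxy)

theorem ratio_antitone_general {N : ℕ} (N1 N2 : ℕ)
    (p q : Fin N → ℝ) (hp : ∀ i, 0 < p i) (hq : ∀ i, 0 < q i) :
    Antitone (fun x => alpha2 N2 p q x / alpha1 N1 p q x) := by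
  have hratio : (fun x => alpha2 N2 p q x / alpha1 N1 p q x) = fun x =>
      (1 / (N2 : ℝ)) / (1 / (N1 : ℝ)) *
        ((∑ i, q i / (p i + q i * exp x)) / ∑ i, p i / (p i + q i * exp x)) := by
    funext x
    exact mul_div_mul_comm _ _ _ _
  rw [hratio]
  exact (antitone_sum_resolvent_div_sum_resolvent hp hq).const_mul (by positivity)

theorem ratio_antitone {N : ℕ} (N1 N2 : ℕ) (hN1 : 0 < N1) (hN2 : 0 < N2)
    (p q : Fin N → ℝ) (hp : ∀ i, 0 < p i) (hq : ∀ i, 0 < q i)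
    (hpq : ∀ i, p i + q i = 1) :
    Antitone (fun x => alpha2 N2 p q x / alpha1 N1 p q x) :=
  ratio_antitone_general N1 N2 p q hp hq
end

section
/- The second eigenvalue of the Jacobian at a fixed point of the two-dimensional SUCPA map, μ = α_1'(b) - e^b α_2'(b), satisfies 0 ≤ μ < 1. -/
open Real Finset Filter

/-!
With `t_i = q_i e^b / (p_i + q_i e^b) ∈ (0, 1)` one has `α₁'(b) = -(1/N₁) Σ t_i (1 - t_i)` and
`e^b α₂'(b) = -(1/N₂) Σ t_i²`, while `α₁(b) = 1` says `Σ t_i = N₂`. Writing `B = Σ t_i²`,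
the eigenvalue is `μ = B/N₂ - (N₂ - B)/N₁`. Cauchy–Schwarz, `N₂² = (Σ t_i)² ≤ (N₁ + N₂) B`, is
exactly `μ ≥ 0`, and `t_i² < t_i` gives `B < N₂`, hence `μ < 1`.
-/

section SumsOfSquares

variable {ι : Type*} [Fintype ι] {t : ι → ℝ} {n₁ n₂ : ℝ}

theorem sum_sq_div_sub_sum_mul_one_sub_div_nonneg (hn₁ : 0 < n₁) (hn₂ : 0 < n₂)
    (hcard : (Fintype.card ι : ℝ) = n₁ + n₂) (hsum : ∑ i, t i = n₂) :
    0 ≤ (∑ i, t i ^ 2) / n₂ - (∑ i, (1 - t i) * t i) / n₁ := by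
  have hcs : n₂ ^ 2 ≤ (n₁ + n₂) * ∑ i, t i ^ 2 := by
    simpa [hsum, hcard] using sq_sum_le_card_mul_sum_sq (s := univ) (f := t)
  have hmix : ∑ i, (1 - t i) * t i = n₂ - ∑ i, t i ^ 2 := by
    rw [← hsum, ← sum_sub_distrib]
    exact sum_congr rfl fun i _ => by ring
  rw [hmix, div_sub_div _ _ hn₂.ne' hn₁.ne']
  apply div_nonneg _ (mul_pos hn₂ hn₁).le
  nlinarith

theorem sum_sq_div_sub_sum_mul_one_sub_div_lt_one [Nonempty ι] (ht₀ : ∀ i, 0 < t i)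
    (ht₁ : ∀ i, t i < 1) (hn₁ : 0 < n₁) (hn₂ : 0 < n₂) (hsum : ∑ i, t i = n₂) :
    (∑ i, t i ^ 2) / n₂ - (∑ i, (1 - t i) * t i) / n₁ < 1 := by
  have hsq : ∑ i, t i ^ 2 < n₂ :=
    hsum ▸ sum_lt_sum_of_nonempty univ_nonempty fun i _ => by nlinarith [ht₀ i, ht₁ i]
  have hmix : 0 ≤ ∑ i, (1 - t i) * t i :=
    sum_nonneg fun i _ => mul_nonneg (by linarith [ht₁ i]) (ht₀ i).le
  have := (div_lt_one hn₂).2 hsq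
  have := div_nonneg hmix hn₁.le
  linarith

end SumsOfSquares

section Sucpa

variable {N : ℕ} (p q : Fin N → ℝ)

/-- The weight `t_i(x)`, in terms of which `α₁ = (1/N₁) Σ (1 - t_i)` and `e^x α₂ = (1/N₂) Σ t_i`. -/
noncomputable def shareWeight (x : ℝ) (i : Fin N) : ℝ :=
  q i * exp x / (p i + q i * exp x)

variable {p q} {x : ℝ}

theorem shareWeight_pos {i : Fin N} (hp : 0 < p i) (hq : 0 < q i) : 0 < shareWeight p q x i :=
  div_pos (mul_pos hq (exp_pos x)) (by positivity)

theorem shareWeight_lt_one {i : Fin N} (hp : 0 < p i) (hq : 0 < q i) :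
    shareWeight p q x i < 1 :=
  (div_lt_one (by positivity)).2 (by linarith)

theorem one_sub_shareWeight {i : Fin N} (hd : p i + q i * exp x ≠ 0) :
    1 - shareWeight p q x i = p i / (p i + q i * exp x) := by
  rw [shareWeight, eq_div_iff hd, sub_mul, div_mul_cancel₀ _ hd]
  ring

theorem hasDerivAt_div_add_mul_exp (a c d : ℝ) (hd : c + d * exp x ≠ 0) :
    HasDerivAt (fun y => a / (c + d * exp y)) (-(a * (d * exp x)) / (c + d * exp x) ^ 2) x := by
  refine ((hasDerivAt_const x a).div (((hasDerivAt_exp x).const_mul d).const_add c)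
    hd).congr_deriv ?_
  ring

theorem hasDerivAt_alpha1 (N1 : ℕ) (hd : ∀ i, p i + q i * exp x ≠ 0) :
    HasDerivAt (alpha1 N1 p q)
      (-(∑ i, (1 - shareWeight p q x i) * shareWeight p q x i) / N1) x := by
  have hterm (i : Fin N) : HasDerivAt (fun y => p i / (p i + q i * exp y))
      (-((1 - shareWeight p q x i) * shareWeight p q x i)) x := by
    convert hasDerivAt_div_add_mul_exp (p i) (p i) (q i) (hd i) using 1
    rw [one_sub_shareWeight (hd i), shareWeight]
    field_simp
  refine ((HasDerivAt.fun_sum (u := univ) fun i _ => hterm i).const_mul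
    (1 / (N1 : ℝ))).congr_deriv ?_
  rw [sum_neg_distrib]
  ring

theorem hasDerivAt_alpha2 (N2 : ℕ) (hd : ∀ i, p i + q i * exp x ≠ 0) :
    HasDerivAt (alpha2 N2 p q) (-(∑ i, shareWeight p q x i ^ 2) / N2 / exp x) x := by
  have hterm (i : Fin N) : HasDerivAt (fun y => q i / (p i + q i * exp y))
      (-(shareWeight p q x i ^ 2) / exp x) x := by
    convert hasDerivAt_div_add_mul_exp (q i) (p i) (q i) (hd i) using 1
    rw [shareWeight]
    field_simp
  refine ((HasDerivAt.fun_sum (u := univ) fun i _ => hterm i).const_mul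
    (1 / (N2 : ℝ))).congr_deriv ?_
  rw [← sum_div, sum_neg_distrib]
  ring

theorem sum_shareWeight_of_alpha1_eq_one {N1 : ℕ} (hN1 : (N1 : ℝ) ≠ 0)
    (hd : ∀ i, p i + q i * exp x ≠ 0) (h : alpha1 N1 p q x = 1) :
    ∑ i, shareWeight p q x i = N - N1 := by
  have hsum : ∑ i, (1 - shareWeight p q x i) = N1 := by
    rw [alpha1, one_div, inv_mul_eq_one₀ hN1] at h
    simp_rw [one_sub_shareWeight (hd _), h]
  rw [sum_sub_distrib, sum_const, card_univ, Fintype.card_fin, nsmul_one] at hsum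
  linarith

end Sucpa

theorem second_eigenvalue_bounds_general {N : ℕ} (N1 N2 : ℕ) (hN1 : 0 < N1) (hN2 : 0 < N2)
    (hN : N1 + N2 = N) (p q : Fin N → ℝ) (hp : ∀ i, 0 < p i) (hq : ∀ i, 0 < q i)
    (b : ℝ) (hb : alpha1 N1 p q b = 1) :
    0 ≤ deriv (alpha1 N1 p q) b - Real.exp b * deriv (alpha2 N2 p q) b ∧
    deriv (alpha1 N1 p q) b - Real.exp b * deriv (alpha2 N2 p q) b < 1 := by
  have hd (i : Fin N) : p i + q i * exp b ≠ 0 := by have := hp i; have := hq i; positivity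
  have hN1r : (0 : ℝ) < N1 := Nat.cast_pos.2 hN1
  have hN2r : (0 : ℝ) < N2 := Nat.cast_pos.2 hN2
  have hsum : ∑ i, shareWeight p q b i = N2 := by
    rw [sum_shareWeight_of_alpha1_eq_one hN1r.ne' hd hb, ← hN, Nat.cast_add, add_sub_cancel_left]
  have : Nonempty (Fin N) := ⟨⟨0, by omega⟩⟩
  have hμ : deriv (alpha1 N1 p q) b - exp b * deriv (alpha2 N2 p q) b =
      (∑ i, shareWeight p q b i ^ 2) / N2 -
        (∑ i, (1 - shareWeight p q b i) * shareWeight p q b i) / N1 := by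
    rw [(hasDerivAt_alpha1 N1 hd).deriv, (hasDerivAt_alpha2 N2 hd).deriv]
    field_simp
    ring
  rw [hμ]
  exact ⟨sum_sq_div_sub_sum_mul_one_sub_div_nonneg hN1r hN2r
      (by rw [Fintype.card_fin, ← hN, Nat.cast_add]) hsum,
    sum_sq_div_sub_sum_mul_one_sub_div_lt_one (fun i => shareWeight_pos (hp i) (hq i))
      (fun i => shareWeight_lt_one (hp i) (hq i)) hN1r hN2r hsum⟩

theorem second_eigenvalue_bounds {N : ℕ} (N1 N2 : ℕ) (hN1 : 0 < N1) (hN2 : 0 < N2)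
    (hN : N1 + N2 = N) (p q : Fin N → ℝ) (hp : ∀ i, 0 < p i) (hq : ∀ i, 0 < q i)
    (hpq : ∀ i, p i + q i = 1) (b : ℝ) (hb : alpha1 N1 p q b = 1) :
    0 ≤ deriv (alpha1 N1 p q) b - Real.exp b * deriv (alpha2 N2 p q) b ∧
    deriv (alpha1 N1 p q) b - Real.exp b * deriv (alpha2 N2 p q) b < 1 :=
  second_eigenvalue_bounds_general N1 N2 hN1 hN2 hN p q hp hq b hb
end

section
/- In the two-class case, if along an orbit the increments Δ_1(t), Δ_2(t) are not both zero, then they have opposite signs (Δ_1(t)·Δ_2(t) < 0); this follows from the identity N_1 e^{-Δ_1(t)} + N_2 e^{-Δ_2(t)} = N with N = N_1 + N_2. -/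
open Real Finset Filter

/- Writing `g x = 1 - e^{-x}`, the identity `N₁ e^{-Δ₁} + N₂ e^{-Δ₂} = N₁ + N₂` says
`N₁ g Δ₁ + N₂ g Δ₂ = 0`. Since `g` is strictly increasing with `g 0 = 0`, `g Δₖ` has the sign of
`Δₖ`, so two increments of the same sign (not both zero) would make the left side nonzero. -/

theorem mul_neg_of_weighted_sum_eq_zero {f : ℝ → ℝ} (hf : StrictMono f) (hf0 : f 0 = 0)
    {a b x y : ℝ} (ha : 0 < a) (hb : 0 < b) (h : a * f x + b * f y = 0)
    (hne : ¬(x = 0 ∧ y = 0)) : x * y < 0 := by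
  by_contra! hxy
  have hsign : 0 ≤ f x * f y := by
    rcases mul_nonneg_iff.mp hxy with ⟨hx, hy⟩ | ⟨hx, hy⟩
    · exact mul_nonneg (hf0 ▸ hf.monotone hx) (hf0 ▸ hf.monotone hy)
    · exact mul_nonneg_of_nonpos_of_nonpos (hf0 ▸ hf.monotone hx) (hf0 ▸ hf.monotone hy)
  have hfx : f x = 0 := by
    have : a * (f x * f x) ≤ 0 := by linear_combination f x * h + mul_nonneg hb.le hsign
    exact mul_self_eq_zero.mp ((nonpos_of_mul_nonpos_right this ha).antisymm (mul_self_nonneg _))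
  have hfy : f y = 0 := by
    have : b * (f y * f y) ≤ 0 := by linear_combination f y * h + mul_nonneg ha.le hsign
    exact mul_self_eq_zero.mp ((nonpos_of_mul_nonpos_right this hb).antisymm (mul_self_nonneg _))
  exact hne ⟨hf.injective (hfx.trans hf0.symm), hf.injective (hfy.trans hf0.symm)⟩

theorem strictMono_one_sub_exp_neg : StrictMono fun x : ℝ => 1 - exp (-x) :=
  fun _ _ h => by simpa using h

theorem exp_sub_neg_log {s : ℝ} (hs : 0 < s) (b : ℝ) : exp (b - -log s) = s * exp b := by
  rw [sub_neg_eq_add, exp_add, exp_log hs, mul_comm]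

section Sucpa2

variable {N : ℕ} (p q : Fin N → ℝ) (β : Fin 2 → ℝ)

theorem sucpa2_denom_pos (hp : ∀ i, 0 < p i) (hq : ∀ i, 0 < q i) (i : Fin N) :
    0 < p i * exp (β 0) + q i * exp (β 1) := by
  have := hp i
  have := hq i
  positivity

theorem sum_div_sucpa2_denom (hp : ∀ i, 0 < p i) (hq : ∀ i, 0 < q i) :
    (∑ i, p i / (p i * exp (β 0) + q i * exp (β 1))) * exp (β 0)
      + (∑ i, q i / (p i * exp (β 0) + q i * exp (β 1))) * exp (β 1) = N := by
  rw [sum_mul, sum_mul, ← sum_add_distrib]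
  have hterm : ∀ i, p i / (p i * exp (β 0) + q i * exp (β 1)) * exp (β 0)
      + q i / (p i * exp (β 0) + q i * exp (β 1)) * exp (β 1) = 1 := fun i => by
    field_simp [(sucpa2_denom_pos p q β hp hq i).ne']
  simp [hterm]

theorem sucpa2_mass_balance {N1 N2 : ℕ} (hN1 : 0 < N1) (hN2 : 0 < N2) (hN : 0 < N)
    (hp : ∀ i, 0 < p i) (hq : ∀ i, 0 < q i) :
    (N1 : ℝ) * exp (β 0 - sucpa2 N1 N2 p q β 0) + N2 * exp (β 1 - sucpa2 N1 N2 p q β 1) = N := by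
  have : Nonempty (Fin N) := ⟨⟨0, hN⟩⟩
  have hD := sucpa2_denom_pos p q β hp hq
  simp only [sucpa2, Matrix.cons_val_zero, Matrix.cons_val_one]
  rw [← sum_div_sucpa2_denom p q β hp hq]
  set A := ∑ i, p i / (p i * exp (β 0) + q i * exp (β 1))
  set B := ∑ i, q i / (p i * exp (β 0) + q i * exp (β 1))
  have hA : 0 < A := sum_pos (fun i _ => div_pos (hp i) (hD i)) univ_nonempty
  have hB : 0 < B := sum_pos (fun i _ => div_pos (hq i) (hD i)) univ_nonempty
  rw [exp_sub_neg_log (by positivity), exp_sub_neg_log (by positivity)]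
  field_simp

end Sucpa2

theorem increments_opposite_signs_general {N : ℕ} (N1 N2 : ℕ) (hN1 : 0 < N1) (hN2 : 0 < N2)
    (hN : N1 + N2 = N) (p q : Fin N → ℝ) (hp : ∀ i, 0 < p i) (hq : ∀ i, 0 < q i)
    (β : Fin 2 → ℝ)
    (Δ1 Δ2 : ℝ) (hΔ1 : Δ1 = sucpa2 N1 N2 p q β 0 - β 0)
    (hΔ2 : Δ2 = sucpa2 N1 N2 p q β 1 - β 1)
    (hne : ¬(Δ1 = 0 ∧ Δ2 = 0)) :
    Δ1 * Δ2 < 0 := by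
  have hbalance := sucpa2_mass_balance p q β hN1 hN2 (by omega) hp hq
  have hNcast : (N : ℝ) = N1 + N2 := by exact_mod_cast hN.symm
  subst hΔ1 hΔ2
  refine mul_neg_of_weighted_sum_eq_zero strictMono_one_sub_exp_neg (by simp)
    (a := N1) (b := N2) (by positivity) (by positivity) ?_ hne
  simp only [neg_sub]
  linear_combination -hbalance - hNcast

theorem increments_opposite_signs {N : ℕ} (N1 N2 : ℕ) (hN1 : 0 < N1) (hN2 : 0 < N2)
    (hN : N1 + N2 = N) (p q : Fin N → ℝ) (hp : ∀ i, 0 < p i) (hq : ∀ i, 0 < q i)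
    (hpq : ∀ i, p i + q i = 1) (β : Fin 2 → ℝ)
    (Δ1 Δ2 : ℝ) (hΔ1 : Δ1 = sucpa2 N1 N2 p q β 0 - β 0)
    (hΔ2 : Δ2 = sucpa2 N1 N2 p q β 1 - β 1)
    (hne : ¬(Δ1 = 0 ∧ Δ2 = 0)) :
    Δ1 * Δ2 < 0 :=
  increments_opposite_signs_general N1 N2 hN1 hN2 hN p q hp hq β Δ1 Δ2 hΔ1 hΔ2 hne
end
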